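/- (General weight construction, Appendix B: vanishing at non-matching latent values.) Let n ≥ 2, fix i ∈ {1,…,n} and k ≠ i with k ∈ {1,…,n}, and let (Ω, F, ν) be a probability space (the conditional law given Y = y_k). For each j ≠ i let h_j, g_j, f_j : Ω → ℝ be integrable random variables and let H_j^i ≠ H_j^j, G_j^i ≠ G_j^j, F_j^i ≠ F_j^j be real numbers. Suppose the 3(n−1) random variables {h_j, g_j, f_j : j ≠ i} are mutually independent under ν, and that ∫ h_k dν = H_k^k, ∫ g_k dν = G_k^k, ∫ f_k dν = F_k^k. Then ω_i is integrable with ∫ ω_i dν = 0. -/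

import Mathlib

open MeasureTheory ProbabilityTheory Finset

/-- The general proxy weight `ω_i` of Appendix B, built from proxy transformations
`h_j, g_j, f_j` (for `j ≠ i`) and the conditional means `H_j^i, H_j^j` (`Hi, Hd`),
`G_j^i, G_j^j` (`Gi, Gd`), `F_j^i, F_j^j` (`Fi, Fd`). -/
noncomputable def generalProxyWeight {Ω : Type*} {n : ℕ} (i : Fin n)
    (h g f : Fin n → Ω → ℝ) (Hi Hd Gi Gd Fi Fd : Fin n → ℝ) (x : Ω) : ℝ :=
  (∏ j ∈ Finset.univ.erase i,
      (h j x - Hd j) * (g j x - Gd j) / ((Hi j - Hd j) * (Gi j - Gd j)))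
  + (∏ j ∈ Finset.univ.erase i,
      (f j x - Fd j) * (h j x - Hd j) / ((Fi j - Fd j) * (Hi j - Hd j)))
  + (∏ j ∈ Finset.univ.erase i,
      (f j x - Fd j) * (g j x - Gd j) / ((Fi j - Fd j) * (Gi j - Gd j)))
  - 2 * (∏ j ∈ Finset.univ.erase i,
      (f j x - Fd j) * (h j x - Hd j) * (g j x - Gd j) /
        ((Fi j - Fd j) * (Hi j - Hd j) * (Gi j - Gd j)))

lemma iIndepFun_congr_ae {Ω ι : Type*} [MeasurableSpace Ω] {μ : Measure Ω}
    {X X' : ι → Ω → ℝ}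
    (hX : iIndepFun X μ)
    (h_eq : ∀ i, X i =ᵐ[μ] X' i) :
    iIndepFun X' μ := by
  rw [iIndepFun_iff_measure_inter_preimage_eq_mul] at hX ⊢
  intro S sets hmeas
  have hae : ∀ i ∈ S, (X' i ⁻¹' sets i : Set Ω) =ᵐ[μ] (X i ⁻¹' sets i : Set Ω) := by
    intro i _
    filter_upwards [h_eq i] with ω hω
    exact congrArg (· ∈ sets i) hω.symm
  have h1 : μ (⋂ i ∈ S, X' i ⁻¹' sets i) = μ (⋂ i ∈ S, X i ⁻¹' sets i) := by
    apply measure_congr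
    have h2 : ∀ᵐ ω ∂μ, ∀ i ∈ S, (X' i ω ∈ sets i ↔ X i ω ∈ sets i) :=
      (MeasureTheory.ae_ball_iff S.countable_toSet).2 fun i hi => by
        filter_upwards [h_eq i] with ω hω; rw [hω]
    filter_upwards [h2] with ω hω
    change (ω ∈ ⋂ i ∈ S, X' i ⁻¹' sets i) = (ω ∈ ⋂ i ∈ S, X i ⁻¹' sets i)
    simp only [eq_iff_iff, Set.mem_iInter, Set.mem_preimage]
    exact forall₂_congr hω
  rw [h1, hX S hmeas]
  exact Finset.prod_congr rfl fun i hi => (measure_congr (hae i hi)).symm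

lemma integrable_prod_and_integral_prod {Ω ι : Type*} [MeasurableSpace Ω] {μ : Measure Ω}
    [IsProbabilityMeasure μ] {X : ι → Ω → ℝ}
    (hX : iIndepFun X μ)
    (hint : ∀ i, Integrable (X i) μ) (s : Finset ι) :
    Integrable (fun ω => ∏ j ∈ s, X j ω) μ ∧
      ∫ ω, ∏ j ∈ s, X j ω ∂μ = ∏ j ∈ s, ∫ ω, X j ω ∂μ := by
  classical
  set X' : ι → Ω → ℝ := fun i => (hint i).1.mk (X i) with hX'def
  have h_eq : ∀ i, X i =ᵐ[μ] X' i := fun i => (hint i).1.ae_eq_mk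
  have hX' : iIndepFun X' μ := iIndepFun_congr_ae hX h_eq
  have meas : ∀ i, Measurable (X' i) := fun i => (hint i).1.stronglyMeasurable_mk.measurable
  have hint' : ∀ i, Integrable (X' i) μ := fun i => (hint i).congr (h_eq i)
  have key : ∀ t : Finset ι, Integrable (fun ω => ∏ j ∈ t, X' j ω) μ ∧
      ∫ ω, ∏ j ∈ t, X' j ω ∂μ = ∏ j ∈ t, ∫ ω, X' j ω ∂μ := by
    intro t
    induction t using Finset.induction_on with
    | empty => simp
    | @insert a t ha ih =>
      have hfin := hX'.indepFun_finset {a} t (by simpa using ha) meas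
      have hφ : Measurable fun v : {x // x ∈ ({a} : Finset ι)} → ℝ =>
          v ⟨a, Finset.mem_singleton_self a⟩ := measurable_pi_apply _
      have hψ : Measurable fun v : {x // x ∈ t} → ℝ => ∏ i : {x // x ∈ t}, v i :=
        Finset.measurable_prod _ fun i _ => measurable_pi_apply i
      have hind : IndepFun (X' a) (fun ω => ∏ j ∈ t, X' j ω) μ := by
        have := hfin.comp hφ hψ
        convert this using 2 with ω
        · rfl
        exact (Finset.prod_coe_sort t fun j => X' j ω).symm
      constructor
      · have := hind.integrable_mul (hint' a) ih.1
        refine this.congr ?_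
        filter_upwards with ω
        simp [Finset.prod_insert ha]
      · have hmul := hind.integral_mul_eq_mul_integral (hint' a).1 ih.1.1
        have h3 : ∫ ω, ∏ j ∈ insert a t, X' j ω ∂μ
            = integral μ (X' a * fun ω => ∏ j ∈ t, X' j ω) := by
          congr 1; funext ω; simp [Finset.prod_insert ha]
        rw [h3, hmul, ih.2, Finset.prod_insert ha]
  have hae : (fun ω => ∏ j ∈ s, X j ω) =ᵐ[μ] fun ω => ∏ j ∈ s, X' j ω := by
    have h2 : ∀ᵐ ω ∂μ, ∀ i ∈ s, X i ω = X' i ω :=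
      (MeasureTheory.ae_ball_iff s.countable_toSet).2 fun i _ => h_eq i
    filter_upwards [h2] with ω hω
    exact Finset.prod_congr rfl hω
  refine ⟨(key s).1.congr hae.symm, ?_⟩
  rw [integral_congr_ae hae, (key s).2]
  exact Finset.prod_congr rfl fun i _ => (integral_congr_ae (h_eq i)).symm

/-- Appendix B: under the conditional law `ν` given `Y = y_k` with
`k ≠ i`, where the factors indexed by `j = k` are centered at their means, the
general proxy weight `ω_i` is integrable with mean zero. -/
theorem generalProxyWeight_integral_eq_zero
    {Ω : Type*} [MeasurableSpace Ω] (ν : Measure Ω) [IsProbabilityMeasure ν]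
    {n : ℕ} (hn : 2 ≤ n) (i k : Fin n) (hk : k ≠ i)
    (h g f : Fin n → Ω → ℝ) (Hi Hd Gi Gd Fi Fd : Fin n → ℝ)
    (hH : ∀ j, j ≠ i → Hi j ≠ Hd j)
    (hG : ∀ j, j ≠ i → Gi j ≠ Gd j)
    (hF : ∀ j, j ≠ i → Fi j ≠ Fd j)
    (hint : ∀ j, j ≠ i →
      Integrable (h j) ν ∧ Integrable (g j) ν ∧ Integrable (f j) ν)
    (hindep : iIndepFun
      (fun jk : {j : Fin n // j ≠ i} × Fin 3 => ![h jk.1.1, g jk.1.1, f jk.1.1] jk.2) ν)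
    (hHmean : ∫ x, h k x ∂ν = Hd k)
    (hGmean : ∫ x, g k x ∂ν = Gd k)
    (hFmean : ∫ x, f k x ∂ν = Fd k) :
    Integrable (generalProxyWeight i h g f Hi Hd Gi Gd Fi Fd) ν ∧
    ∫ x, generalProxyWeight i h g f Hi Hd Gi Gd Fi Fd x ∂ν = 0 := by
  classical
  set ι' := ({j : Fin n // j ≠ i} × Fin 3)
  set c : ι' → ℝ := fun p => ![Hd p.1.1, Gd p.1.1, Fd p.1.1] p.2 with hc
  set d : ι' → ℝ := fun p => ![Hi p.1.1, Gi p.1.1, Fi p.1.1] p.2 with hd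
  set Z : ι' → Ω → ℝ :=
    fun p => (fun x => (x - c p) / (d p - c p)) ∘ (![h p.1.1, g p.1.1, f p.1.1] p.2) with hZ
  have hZindep : iIndepFun Z ν :=
    hindep.comp (fun p x => (x - c p) / (d p - c p)) (fun p => by fun_prop)
  have hZint : ∀ p, Integrable (Z p) ν := by
    rintro ⟨⟨j, hj⟩, t⟩
    fin_cases t <;>
      simp only [hZ, hc, hd, Function.comp_def, Matrix.cons_val_zero, Matrix.cons_val_one,
        Matrix.head_cons, Matrix.cons_val_two, Matrix.tail_cons] <;>
    [exact ((hint j hj).1.sub (integrable_const _)).div_const _;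
     exact ((hint j hj).2.1.sub (integrable_const _)).div_const _;
     exact ((hint j hj).2.2.sub (integrable_const _)).div_const _]
  set K : {j : Fin n // j ≠ i} := ⟨k, hk⟩ with hK
  have hZmean : ∀ t : Fin 3, ∫ x, Z (K, t) x ∂ν = 0 := by
    intro t
    fin_cases t <;>
      simp only [hZ, hc, hd, hK, Function.comp_def, Matrix.cons_val_zero, Matrix.cons_val_one,
        Matrix.head_cons, Matrix.cons_val_two, Matrix.tail_cons] <;>
    · rw [integral_div, integral_sub (by first
        | exact (hint k hk).1 | exact (hint k hk).2.1 | exact (hint k hk).2.2)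
        (integrable_const _), integral_const]
      simp [hHmean, hGmean, hFmean]
  -- the four index sets
  set T1 : Finset ι' := Finset.univ ×ˢ ({0, 1} : Finset (Fin 3)) with hT1
  set T2 : Finset ι' := Finset.univ ×ˢ ({2, 0} : Finset (Fin 3)) with hT2
  set T3 : Finset ι' := Finset.univ ×ˢ ({2, 1} : Finset (Fin 3)) with hT3
  set T4 : Finset ι' := Finset.univ ×ˢ ({2, 0, 1} : Finset (Fin 3)) with hT4
  have hsub : ∀ (F : Fin n → ℝ), (∏ j ∈ Finset.univ.erase i, F j)
      = ∏ j : {j : Fin n // j ≠ i}, F j.1 := by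
    intro F
    exact Finset.prod_subtype _ (fun x => by simp [Finset.mem_erase]) _
  have ht1 : ∀ x, (∏ j ∈ Finset.univ.erase i,
      (h j x - Hd j) * (g j x - Gd j) / ((Hi j - Hd j) * (Gi j - Gd j)))
      = ∏ p ∈ T1, Z p x := by
    intro x
    rw [hT1, Finset.prod_product, hsub]
    refine Finset.prod_congr rfl fun j _ => ?_
    rw [Finset.prod_pair (by decide)]
    simp only [hZ, hc, hd, Function.comp_def, Matrix.cons_val_zero, Matrix.cons_val_one,
      Matrix.head_cons, Matrix.cons_val_two, Matrix.tail_cons]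
    simp only [mul_div_mul_comm, mul_assoc]
  have ht2 : ∀ x, (∏ j ∈ Finset.univ.erase i,
      (f j x - Fd j) * (h j x - Hd j) / ((Fi j - Fd j) * (Hi j - Hd j)))
      = ∏ p ∈ T2, Z p x := by
    intro x
    rw [hT2, Finset.prod_product, hsub]
    refine Finset.prod_congr rfl fun j _ => ?_
    rw [Finset.prod_pair (by decide)]
    simp only [hZ, hc, hd, Function.comp_def, Matrix.cons_val_zero, Matrix.cons_val_one,
      Matrix.head_cons, Matrix.cons_val_two, Matrix.tail_cons]
    simp only [mul_div_mul_comm, mul_assoc]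
  have ht3 : ∀ x, (∏ j ∈ Finset.univ.erase i,
      (f j x - Fd j) * (g j x - Gd j) / ((Fi j - Fd j) * (Gi j - Gd j)))
      = ∏ p ∈ T3, Z p x := by
    intro x
    rw [hT3, Finset.prod_product, hsub]
    refine Finset.prod_congr rfl fun j _ => ?_
    rw [Finset.prod_pair (by decide)]
    simp only [hZ, hc, hd, Function.comp_def, Matrix.cons_val_zero, Matrix.cons_val_one,
      Matrix.head_cons, Matrix.cons_val_two, Matrix.tail_cons]
    simp only [mul_div_mul_comm, mul_assoc]
  have ht4 : ∀ x, (∏ j ∈ Finset.univ.erase i,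
      (f j x - Fd j) * (h j x - Hd j) * (g j x - Gd j) /
        ((Fi j - Fd j) * (Hi j - Hd j) * (Gi j - Gd j)))
      = ∏ p ∈ T4, Z p x := by
    intro x
    rw [hT4, Finset.prod_product, hsub]
    refine Finset.prod_congr rfl fun j _ => ?_
    rw [Finset.prod_insert (by decide), Finset.prod_pair (by decide)]
    simp only [hZ, hc, hd, Function.comp_def, Matrix.cons_val_zero, Matrix.cons_val_one,
      Matrix.head_cons, Matrix.cons_val_two, Matrix.tail_cons]
    simp only [mul_div_mul_comm, mul_assoc]
  obtain ⟨I1, E1⟩ := integrable_prod_and_integral_prod hZindep hZint T1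
  obtain ⟨I2, E2⟩ := integrable_prod_and_integral_prod hZindep hZint T2
  obtain ⟨I3, E3⟩ := integrable_prod_and_integral_prod hZindep hZint T3
  obtain ⟨I4, E4⟩ := integrable_prod_and_integral_prod hZindep hZint T4
  have hfun : generalProxyWeight i h g f Hi Hd Gi Gd Fi Fd = fun x =>
      (∏ p ∈ T1, Z p x) + (∏ p ∈ T2, Z p x) + (∏ p ∈ T3, Z p x)
        - 2 * ∏ p ∈ T4, Z p x := by
    funext x
    rw [generalProxyWeight, ht1 x, ht2 x, ht3 x, ht4 x]
  have hE : ∀ (T : Finset ι') (t : Fin 3), (K, t) ∈ T →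
      (∏ p ∈ T, ∫ x, Z p x ∂ν) = 0 := fun T t hmem =>
    Finset.prod_eq_zero hmem (hZmean t)
  have hm1 : (K, (0 : Fin 3)) ∈ T1 := by
    rw [hT1, Finset.mem_product]; exact ⟨Finset.mem_univ _, by simp⟩
  have hm2 : (K, (2 : Fin 3)) ∈ T2 := by
    rw [hT2, Finset.mem_product]; exact ⟨Finset.mem_univ _, by simp⟩
  have hm3 : (K, (2 : Fin 3)) ∈ T3 := by
    rw [hT3, Finset.mem_product]; exact ⟨Finset.mem_univ _, by simp⟩
  have hm4 : (K, (2 : Fin 3)) ∈ T4 := by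
    rw [hT4, Finset.mem_product]; exact ⟨Finset.mem_univ _, by simp⟩
  have I12 : Integrable (fun x => (∏ p ∈ T1, Z p x) + ∏ p ∈ T2, Z p x) ν := I1.add I2
  have I123 : Integrable
      (fun x => (∏ p ∈ T1, Z p x) + (∏ p ∈ T2, Z p x) + ∏ p ∈ T3, Z p x) ν := I12.add I3
  have I4' : Integrable (fun x => 2 * ∏ p ∈ T4, Z p x) ν := I4.const_mul 2
  constructor
  · rw [hfun]
    exact I123.sub I4'
  · rw [hfun]
    simp only []
    rw [integral_sub I123 I4', integral_add I12 I3,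
      integral_add I1 I2, integral_const_mul, E1, E2, E3, E4,
      hE T1 0 hm1, hE T2 2 hm2, hE T3 2 hm3, hE T4 2 hm4]
    ring
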